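/- arXiv:1608.08843 — 2 statements merged into one kernel-verified Lean document; each statement's English description precedes it below -/
import Mathlib

section
/- Let k ≥ 2, let P be a finite poset excluding k+k, with height h and maximum chain C = {c_1 < … < c_h}. For 0 ≤ i ≤ i+m ≤ h−1, the subposet Dn(i,m) = Dn(i) ∪ … ∪ Dn(i+m) ∪ {c_{i+1},…,c_{i+m}} is convex in P and has height at most m + 2k − 2. -/
/-!
Write `dn z` and `up z` for the positions of `z` relative to the maximum chain `C`.
Convexity holds because `dn` is monotone and an element `c_j` of `C` above a point of
`Dn(i, m)` has `j > i`. For the height, let `T` be a chain in `Dn(i, m)`: at most `m` of its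
points lie on `C`. If at least `k` lie off `C`, let `z` be the `k`-th largest of these and
`u = up z`. The `k` off-chain points `≥ z` and `c_{i+m+1}, …, c_{i+m+k}` would form `k + k`
unless `u ≤ i + m + k`. The points of `T` below `z`, together with `c_1, …, c_i` and
`c_u, …, c_h`, form a chain, so by maximality of `C` there are at most `u - 1 - i` of them;
above `z` lie at most `i + m + 1 - u` points of `C` and `k - 1` further points of `T`.
As `u ≤ i + m + k`, this adds up to at most `m + 2k - 2`.
-/

variable {α : Type*}

/-- A linear extension of a partial order, given as a binary relation. -/
def IsLinExt [PartialOrder α] (r : α → α → Prop) : Prop :=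
  IsLinearOrder α r ∧ ∀ x y : α, x ≤ y → r x y

/-- A realizer: a family of linear extensions whose intersection is the order. -/
def IsRealizer [PartialOrder α] {d : ℕ} (L : Fin d → α → α → Prop) : Prop :=
  (∀ i, IsLinExt (L i)) ∧ ∀ x y : α, x ≤ y ↔ ∀ i, L i x y

/-- The order dimension of a poset: the least positive `d` admitting a realizer of size `d`. -/
noncomputable def pdim (α : Type*) [PartialOrder α] : ℕ :=
  sInf {d | 0 < d ∧ ∃ L : Fin d → α → α → Prop, IsRealizer L}

/-- The set of (ordered) incomparable pairs of a poset. -/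
def IncPairs (α : Type*) [PartialOrder α] : Set (α × α) :=
  {p | ¬ p.1 ≤ p.2 ∧ ¬ p.2 ≤ p.1}

/-- `r` reverses every pair `(x, y)` in `S`, i.e. `x > y` in `r`. -/
def Reverses [PartialOrder α] (r : α → α → Prop) (S : Set (α × α)) : Prop :=
  ∀ p ∈ S, r p.2 p.1 ∧ ¬ r p.1 p.2

/-- A set of incomparable pairs is reversible if some linear extension reverses all of them. -/
def Reversible [PartialOrder α] (S : Set (α × α)) : Prop :=
  ∃ r, IsLinExt r ∧ Reverses r S

/-- `d` linear extensions suffice to reverse every pair of `S` (i.e. `dim S ≤ d`). -/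
def RealizerOn [PartialOrder α] (d : ℕ) (S : Set (α × α)) : Prop :=
  ∃ L : Fin d → α → α → Prop, (∀ i, IsLinExt (L i)) ∧
    ∀ p ∈ S, ∃ i, L i p.2 p.1 ∧ ¬ L i p.1 p.2

/-- The height of a subset of a poset: the maximum size of a chain contained in it. -/
noncomputable def heightSet [PartialOrder α] (S : Set α) : ℕ :=
  sSup {n | ∃ t : Finset α, ↑t ⊆ S ∧ IsChain (· ≤ ·) (↑t : Set α) ∧ t.card = n}

/-- The height of a poset: the maximum size of a chain. -/
noncomputable def pheight (α : Type*) [PartialOrder α] : ℕ :=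
  heightSet (Set.univ : Set α)

/-- The poset `k + k`: the disjoint sum of two `k`-element chains. -/
def TwoChains (k : ℕ) : Type := Fin k ⊕ Fin k

def TwoChains.le {k : ℕ} : TwoChains k → TwoChains k → Prop
  | .inl i, .inl j => i.1 ≤ j.1
  | .inr i, .inr j => i.1 ≤ j.1
  | _, _ => False

theorem TwoChains.le_refl' {k : ℕ} (x : TwoChains k) : TwoChains.le x x := by
  cases x <;> simp [TwoChains.le]

theorem TwoChains.le_trans' {k : ℕ} (x y z : TwoChains k)
    (hxy : TwoChains.le x y) (hyz : TwoChains.le y z) : TwoChains.le x z := by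
  cases x <;> cases y <;> cases z <;> simp_all [TwoChains.le] <;> omega

theorem TwoChains.le_antisymm' {k : ℕ} (x y : TwoChains k)
    (hxy : TwoChains.le x y) (hyx : TwoChains.le y x) : x = y := by
  cases x <;> cases y <;> simp_all [TwoChains.le] <;>
    exact congrArg _ (le_antisymm hxy hyx)

instance (k : ℕ) : PartialOrder (TwoChains k) where
  le := TwoChains.le
  le_refl := TwoChains.le_refl'
  le_trans := TwoChains.le_trans'
  le_antisymm := TwoChains.le_antisymm'

/-- Given a chain `c : Fin h → α` (listing `c_1 < ⋯ < c_h`), `dnN c z` is the greatest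
1-based index `i` with `c_i ≤ z`, and `0` if there is none. -/
noncomputable def dnN [PartialOrder α] {h : ℕ} (c : Fin h → α) (z : α) : ℕ :=
  {i : Fin h | c i ≤ z}.ncard

/-- `upN c z` is the least 1-based index `j` with `z ≤ c_j`, and `h + 1` if there is none. -/
noncomputable def upN [PartialOrder α] {h : ℕ} (c : Fin h → α) (z : α) : ℕ :=
  h + 1 - {i : Fin h | z ≤ c i}.ncard

/-- A pair `(x, y)` is dangerous when `dn(x) < dn(y) < up(x) < up(y)`. -/
def Dangerous [PartialOrder α] {h : ℕ} (c : Fin h → α) (p : α × α) : Prop :=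
  dnN c p.1 < dnN c p.2 ∧ dnN c p.2 < upN c p.1 ∧ upN c p.1 < upN c p.2

/-- `Dn(i)`: points outside the chain whose down-index is exactly `i`. -/
def Dn [PartialOrder α] {h : ℕ} (c : Fin h → α) (i : ℕ) : Set α :=
  {z | z ∉ Set.range c ∧ dnN c z = i}

/-- `Ar(i, i+1)`: points outside the chain with `dn(z) ≤ i` and `up(z) ≥ i + 1`. -/
def Ar [PartialOrder α] {h : ℕ} (c : Fin h → α) (i : ℕ) : Set α :=
  {z | z ∉ Set.range c ∧ dnN c z ≤ i ∧ i + 1 ≤ upN c z}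

/-- `Dn(i, m) = Dn(i) ∪ ⋯ ∪ Dn(i+m) ∪ {c_{i+1}, …, c_{i+m}}`. -/
def DnM {α : Type*} [PartialOrder α] {h : ℕ} (c : Fin h → α) (i m : ℕ) : Set α :=
  {z | z ∉ Set.range c ∧ i ≤ dnN c z ∧ dnN c z ≤ i + m} ∪
    {x | ∃ j : Fin h, x = c j ∧ i ≤ j.1 ∧ j.1 + 1 ≤ i + m}

open Finset

lemma IsChain.exists_strictMono_fin {α : Type*} [PartialOrder α] {s : Finset α}
    (hs : IsChain (· ≤ ·) (s : Set α)) :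
    ∃ g : Fin #s → α, StrictMono g ∧ ∀ x, x ∈ s ↔ ∃ q, g q = x := by
  classical
  let _ := hs.linearOrder
  let e := monoEquivOfFin (s : Set α) (k := #s) (by simp)
  refine ⟨fun q => (e q).1, fun q q' hq => e.strictMono hq, fun x => ⟨fun hx => ?_, ?_⟩⟩
  · exact ⟨e.symm ⟨x, hx⟩, by simp⟩
  · rintro ⟨q, rfl⟩
    exact (e q).2

lemma Finset.card_le_sub_of_forall_mem_image {α : Type*} {n : ℕ} (f : Fin n → α) {a b : ℕ}
    {s : Finset α} (hs : ∀ x ∈ s, ∃ j : Fin n, f j = x ∧ a ≤ j ∧ j < b) :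
    #s ≤ b - a := by
  classical
  calc #s ≤ #((univ.filter fun j : Fin n => a ≤ j ∧ j < b).image f) :=
        card_le_card fun x hx => by
          obtain ⟨j, rfl, hj⟩ := hs x hx
          exact mem_image_of_mem f (by simpa using hj)
    _ ≤ #(univ.filter fun j : Fin n => a ≤ j ∧ j < b) := card_image_le
    _ ≤ #(Ico a b) :=
        card_le_card_of_injOn Fin.val (fun j hj => by simpa using hj) Fin.val_injective.injOn
    _ = b - a := Nat.card_Ico a b

lemma TwoChains.nonempty_orderEmbedding {α : Type*} [PartialOrder α] {k : ℕ}
    {f g : Fin k → α} (hf : StrictMono f) (hg : StrictMono g) (hfg : ∀ a b, ¬ f a ≤ g b)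
    (hgf : ∀ a b, ¬ g a ≤ f b) : Nonempty (TwoChains k ↪o α) :=
  ⟨OrderEmbedding.ofMapLEIff (Sum.elim f g) <| by
    rintro (a | a) (b | b)
    · exact hf.le_iff_le
    · exact iff_of_false (hfg a b) id
    · exact iff_of_false (hgf a b) id
    · exact hg.le_iff_le⟩

lemma heightSet_le {α : Type*} [PartialOrder α] {S : Set α} {n : ℕ}
    (hS : ∀ t : Finset α, ↑t ⊆ S → IsChain (· ≤ ·) (t : Set α) → #t ≤ n) :
    heightSet S ≤ n :=
  csSup_le ⟨0, ∅, by simp, by simp, rfl⟩ <| by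
    rintro _ ⟨t, htS, ht, rfl⟩
    exact hS t htS ht

section ChainIndex

variable {α : Type*} [PartialOrder α] {h : ℕ} {c : Fin h → α} {z : α}

open scoped Classical in
lemma dnN_eq_card (c : Fin h → α) (z : α) : dnN c z = #{i | c i ≤ z} := by
  rw [dnN, ← Set.ncard_coe_finset]; simp

open scoped Classical in
lemma upN_eq_card_add_one (c : Fin h → α) (z : α) : upN c z = #{i | ¬ z ≤ c i} + 1 := by
  have hsplit := card_filter_add_card_filter_not (s := univ) (fun i : Fin h => z ≤ c i)
  rw [upN, Set.ncard_eq_toFinset_card', Set.toFinset_ofPred]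
  rw [card_univ, Fintype.card_fin] at hsplit
  omega

lemma upN_le (c : Fin h → α) (z : α) : upN c z ≤ h + 1 := by
  rw [upN]; omega

lemma dnN_mono (c : Fin h → α) : Monotone (dnN c) := fun _ _ hzw =>
  Set.ncard_le_ncard (fun _ hi => le_trans hi hzw)

lemma lt_dnN_iff (hc : Monotone c) (j : Fin h) : j < dnN c z ↔ c j ≤ z := by
  classical
  rw [dnN_eq_card]
  exact Fin.lt_card_filter_univ_iff_apply_of_imp _ fun _ _ hji hi => (hc hji).trans hi

lemma upN_le_iff (hc : Monotone c) (j : Fin h) : upN c z ≤ j + 1 ↔ z ≤ c j := by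
  classical
  rw [upN_eq_card_add_one, add_le_add_iff_right, ← not_lt, not_iff_comm]
  exact (Fin.lt_card_filter_univ_iff_apply_of_imp (fun i => ¬ z ≤ c i)
    fun _ _ hji hi hj => hi (hj.trans (hc hji))).symm

lemma dnN_apply (hc : StrictMono c) (j : Fin h) : dnN c (c j) = j + 1 := by
  classical
  simp_rw [dnN_eq_card, hc.le_iff_le, filter_ge_eq_Iic, Fin.card_Iic]

lemma dnN_lt_upN (hz : z ∉ Set.range c) : dnN c z < upN c z := by
  classical
  rw [dnN_eq_card, upN_eq_card_add_one, Nat.lt_succ_iff]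
  exact card_le_card fun i hi => by
    simp only [mem_filter, mem_univ, true_and] at hi ⊢
    exact fun hzi => hz ⟨i, le_antisymm hi hzi⟩

lemma upN_le_add_of_twoChains_free {k : ℕ} (hexc : ¬ Nonempty (TwoChains k ↪o α))
    (hc : StrictMono c) {f : Fin k → α} (hf : StrictMono f) (hz : ∀ a, z ≤ f a) {n : ℕ}
    (hdn : ∀ a, dnN c (f a) ≤ n) : upN c z ≤ n + k := by
  by_contra! hlt
  have hnk : n + k ≤ h := by have := upN_le c z; omega
  refine hexc <| TwoChains.nonempty_orderEmbedding hf (g := fun b => c ⟨n + b, by omega⟩)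
    (hc.comp fun a b hab => Fin.mk_lt_mk.2 (by simpa using hab)) (fun a b hab => ?_)
    fun a b hab => ?_
  · have hzb := (upN_le_iff hc.monotone _).2 ((hz a).trans hab)
    simp only at hzb
    omega
  · have hab' := (lt_dnN_iff hc.monotone _).2 hab
    simp only at hab'
    have := hdn b
    omega

end ChainIndex

section MaximumChain

variable {α : Type*} [PartialOrder α] [Fintype α]

lemma Finset.card_le_pheight {t : Finset α} (ht : IsChain (· ≤ ·) (t : Set α)) :
    #t ≤ pheight α :=
  le_csSup ⟨Fintype.card α, by rintro _ ⟨s, -, -, rfl⟩; exact card_le_univ s⟩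
    ⟨t, Set.subset_univ _, ht, rfl⟩

lemma card_le_of_isChain_of_forall_lt {c : Fin (pheight α) → α} (hc : StrictMono c)
    {s : Finset α} (hs : IsChain (· ≤ ·) (s : Set α)) {a b : ℕ}
    (hlo : ∀ x ∈ s, ∀ q : Fin (pheight α), q < a → c q < x)
    (hhi : ∀ x ∈ s, ∀ q : Fin (pheight α), b ≤ q → x < c q) : #s ≤ b - a := by
  classical
  set Q : Finset (Fin (pheight α)) := {q | q < a ∨ b ≤ q}
  have hcomp : ∀ q ∈ Q, ∀ x ∈ s, c q < x ∨ x < c q := fun q hq x hx => by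
    rcases (mem_filter.1 hq).2 with hqa | hqb
    exacts [.inl (hlo x hx q hqa), .inr (hhi x hx q hqb)]
  have hdisj : Disjoint (Q.image c) s := disjoint_left.2 fun y hy hys => by
    obtain ⟨q, hq, rfl⟩ := mem_image.1 hy
    rcases hcomp q hq _ hys with hlt | hlt <;> exact hlt.ne rfl
  have hchain : IsChain (· ≤ ·) ((Q.image c ∪ s : Finset α) : Set α) := by
    rw [coe_union, coe_image, isChain_union]
    refine ⟨hc.monotone.isChain_range.mono (Set.image_subset_range _ _), hs, ?_⟩
    rintro _ ⟨q, hq, rfl⟩ x hx -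
    exact (hcomp q hq x hx).imp le_of_lt le_of_lt
  have hQc : #Qᶜ ≤ b - a := card_le_sub_of_forall_mem_image id fun q hq => by
    simp only [Q, compl_filter, mem_filter, mem_univ, true_and, not_or, not_lt, not_le] at hq
    exact ⟨q, rfl, hq⟩
  have hmax := (Q.image c ∪ s).card_le_pheight hchain
  rw [card_union_of_disjoint hdisj, card_image_of_injective _ hc.injective] at hmax
  have := card_add_card_compl Q
  rw [Fintype.card_fin] at this
  omega

end MaximumChain

section DnM

variable {α : Type*} [PartialOrder α] {h : ℕ} {c : Fin h → α} {i m : ℕ} {x : α}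

lemma dnN_mem_Icc_of_mem_DnM (hc : StrictMono c) (hx : x ∈ DnM c i m) :
    i ≤ dnN c x ∧ dnN c x ≤ i + m := by
  rcases hx with ⟨-, hx⟩ | ⟨j, rfl, hij, hjm⟩
  · exact hx
  · rw [dnN_apply hc]
    omega

lemma exists_eq_apply_of_mem_DnM (hx : x ∈ DnM c i m) (hxc : x ∈ Set.range c) :
    ∃ j : Fin h, c j = x ∧ i ≤ j ∧ j < i + m := by
  rcases hx with ⟨hxc', -⟩ | ⟨j, rfl, hij, hjm⟩
  · exact absurd hxc hxc'
  · exact ⟨j, rfl, hij, hjm⟩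

lemma apply_lt_of_mem_DnM (hc : StrictMono c) (hx : x ∈ DnM c i m) {q : Fin h} (hq : q < i) :
    c q < x := by
  rcases hx with ⟨hxc, hix, -⟩ | ⟨j, rfl, hij, -⟩
  · exact ((lt_dnN_iff hc.monotone q).1 (by omega)).lt_of_ne fun hqx => hxc ⟨q, hqx⟩
  · exact hc (Fin.lt_def.2 (by omega))

lemma le_of_mem_DnM_of_le_apply (hc : StrictMono c) (hx : x ∈ DnM c i m) {j : Fin h}
    (hxj : x ≤ c j) : i ≤ j := by
  rcases hx with ⟨hxc, hix, -⟩ | ⟨j', rfl, hij', -⟩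
  · have : dnN c x ≤ j := not_lt.1 fun hjx =>
      hxc ⟨j, le_antisymm ((lt_dnN_iff hc.monotone j).1 hjx) hxj⟩
    omega
  · exact hij'.trans (hc.le_iff_le.1 hxj)

lemma ordConnected_DnM (hc : StrictMono c) : (DnM c i m).OrdConnected := by
  refine ⟨fun x hx z hz y ⟨hxy, hyz⟩ => ?_⟩
  have hiy : i ≤ dnN c y := (dnN_mem_Icc_of_mem_DnM hc hx).1.trans (dnN_mono c hxy)
  have hym : dnN c y ≤ i + m := (dnN_mono c hyz).trans (dnN_mem_Icc_of_mem_DnM hc hz).2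
  by_cases hyc : y ∈ Set.range c
  · obtain ⟨j, rfl⟩ := hyc
    rw [dnN_apply hc] at hym
    exact Or.inr ⟨j, rfl, le_of_mem_DnM_of_le_apply hc hx hxy, hym⟩
  · exact Or.inl ⟨hyc, hiy, hym⟩

end DnM

section Height

variable {α : Type*} [PartialOrder α] [Fintype α] {c : Fin (pheight α) → α} {i m : ℕ}
  {t : Finset α}

open scoped Classical in
lemma card_le_of_isChain_subset_DnM_of_mem (hc : StrictMono c) (hts : ↑t ⊆ DnM c i m)
    (ht : IsChain (· ≤ ·) (t : Set α)) {z : α} (hzt : z ∈ t) (hzc : z ∉ Set.range c) :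
    #t ≤ (upN c z - 1 - i) + (i + m - (upN c z - 1)) +
      #{x ∈ t | ¬ x ≤ z ∧ x ∉ Set.range c} := by
  have hlow : #{x ∈ t | x ≤ z} ≤ upN c z - 1 - i := by
    refine card_le_of_isChain_of_forall_lt hc (ht.mono (coe_subset.2 (filter_subset _ _)))
      (fun x hx q hq => apply_lt_of_mem_DnM hc (hts (mem_filter.1 hx).1) hq)
      fun x hx q hq => ?_
    obtain ⟨-, hxz⟩ := mem_filter.1 hx
    have hzq : z ≤ c q := (upN_le_iff hc.monotone q).1 (by omega)
    exact (hxz.trans hzq).lt_of_ne fun hxq => hzc ⟨q, le_antisymm (hxq ▸ hxz) hzq⟩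
  have hon : #{x ∈ t | ¬ x ≤ z ∧ x ∈ Set.range c} ≤ i + m - (upN c z - 1) := by
    refine card_le_sub_of_forall_mem_image c fun x hx => ?_
    obtain ⟨hxt, hxz, hxc⟩ := mem_filter.1 hx
    obtain ⟨j, rfl, -, hj⟩ := exists_eq_apply_of_mem_DnM (hts hxt) hxc
    have hzj : upN c z ≤ j + 1 :=
      (upN_le_iff hc.monotone j).2 ((ht.total hxt hzt).resolve_left hxz)
    exact ⟨j, rfl, by omega, hj⟩
  rw [← card_filter_add_card_filter_not (p := (· ≤ z)),
    ← card_filter_add_card_filter_not (s := {x ∈ t | ¬ x ≤ z}) (p := (· ∈ Set.range c)),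
    filter_filter, filter_filter]
  omega

open scoped Classical in
lemma card_le_of_isChain_subset_DnM {k : ℕ} (hk : 1 ≤ k)
    (hexc : ¬ Nonempty (TwoChains k ↪o α)) (hc : StrictMono c) (hts : ↑t ⊆ DnM c i m)
    (ht : IsChain (· ≤ ·) (t : Set α)) :
    #t ≤ m + 2 * k - 2 := by
  have hon : #{x ∈ t | x ∈ Set.range c} ≤ m := by
    refine (card_le_sub_of_forall_mem_image c (a := i) (b := i + m) fun x hx => ?_).trans_eq
      (by omega)
    exact exists_eq_apply_of_mem_DnM (hts (mem_filter.1 hx).1) (mem_filter.1 hx).2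
  set Z := {x ∈ t | x ∉ Set.range c}
  have hsplit : #{x ∈ t | x ∈ Set.range c} + #Z = #t := card_filter_add_card_filter_not _
  obtain hZk | hkZ := lt_or_ge #Z k
  · omega
  have hZ : IsChain (· ≤ ·) (Z : Set α) := ht.mono (coe_subset.2 (filter_subset _ _))
  obtain ⟨g, hg, hgZ⟩ := hZ.exists_strictMono_fin
  -- `z` is the `k`-th largest element of `Z`
  set z := g ⟨#Z - k, by omega⟩
  obtain ⟨hzt, hzc⟩ := mem_filter.1 ((hgZ z).2 ⟨_, rfl⟩)
  have hU : upN c z ≤ i + m + k := by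
    refine upN_le_add_of_twoChains_free hexc hc (f := fun a => g ⟨#Z - k + a, by omega⟩)
      (hg.comp fun a b hab => Fin.mk_lt_mk.2 (by simpa using hab))
      (fun a => hg.monotone (Fin.mk_le_mk.2 (by omega))) fun a => ?_
    exact (dnN_mem_Icc_of_mem_DnM hc (hts (mem_filter.1 ((hgZ _).2 ⟨_, rfl⟩)).1)).2
  have habove : #{x ∈ t | ¬ x ≤ z ∧ x ∉ Set.range c} ≤ #Z - (#Z - k + 1) := by
    refine card_le_sub_of_forall_mem_image g fun x hx => ?_
    obtain ⟨hxt, hxz, hxc⟩ := mem_filter.1 hx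
    obtain ⟨q, rfl⟩ := (hgZ x).1 (mem_filter.2 ⟨hxt, hxc⟩)
    refine ⟨q, rfl, ?_, q.2⟩
    by_contra! hq
    exact hxz (hg.monotone (Fin.mk_le_mk.2 (by omega)))
  have hiz := (dnN_mem_Icc_of_mem_DnM hc (hts hzt)).1
  have hzU := dnN_lt_upN hzc
  have := card_le_of_isChain_subset_DnM_of_mem hc hts ht hzt hzc
  omega

end Height

theorem dnM_convex_height_le_general {α : Type*} [PartialOrder α] [Fintype α] (k : ℕ) (hk : 2 ≤ k)
    (hexc : ¬ Nonempty (TwoChains k ↪o α))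
    (c : Fin (pheight α) → α) (hc : StrictMono c)
    (i m : ℕ) :
    (DnM c i m).OrdConnected ∧ heightSet (DnM c i m) ≤ m + 2 * k - 2 :=
  ⟨ordConnected_DnM hc,
    heightSet_le fun _ hts ht => card_le_of_isChain_subset_DnM (by omega) hexc hc hts ht⟩

/-- If `P` excludes `k + k` and `C` is a maximum chain, then for `0 ≤ i ≤ i + m ≤ h − 1`
the subposet `Dn(i, m)` is convex and has height at most `m + 2k − 2`. -/
theorem dnM_convex_height_le {α : Type*} [PartialOrder α] [Fintype α] (k : ℕ) (hk : 2 ≤ k)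
    (hexc : ¬ Nonempty (TwoChains k ↪o α))
    (c : Fin (pheight α) → α) (hc : StrictMono c)
    (i m : ℕ) (him : i + m ≤ pheight α - 1) :
    (DnM c i m).OrdConnected ∧ heightSet (DnM c i m) ≤ m + 2 * k - 2 :=
  dnM_convex_height_le_general k hk hexc c hc i m
end

section
/- For every n ≥ 2, there exists a finite poset P that excludes 3+3 (the disjoint sum of two 3-element chains), satisfies dim(P) ≥ n, and has the property that every convex subposet Q of P satisfies dim(Q) ≤ h(Q) + 1, where h(Q) is the height of Q. -/
/-!
The poset is the standard example `S_n` (`a_i ∥ b_i`, `a_i < b_j` for `i ≠ j`), which forces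
dimension at least `n`, threaded by a chain `c_0 < ⋯ < c_n`. Only the `c`'s lie strictly inside
a 3-element chain, so the middles of two 3-chains are comparable and `3 + 3` does not embed.
A subposet `Q` is realized by two linear extensions reversing every incomparable pair except the
`(a_i, b_i)`, plus one extension for each `i` with `a_i, b_i ∈ Q`. If `Q` is convex and contains
such pairs for `i < j`, it contains the chain `a_i < c_{i+1} < ⋯ < c_j < b_j`, so there are at most
`h(Q) - 1` of them; otherwise `dim Q ≤ 3`, or `Q` is an antichain of dimension at most 2.
-/

variable {α : Type*}

section General

variable [PartialOrder α]

theorem isLinExt_of_monotone_of_injective {β : Type*} [LinearOrder β] {ρ : α → β}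
    (hmono : Monotone ρ) (hinj : Function.Injective ρ) : IsLinExt fun x y => ρ x ≤ ρ y :=
  ⟨{ refl := fun _ => le_rfl
     trans := fun _ _ _ => le_trans
     antisymm := fun _ _ h h' => hinj (le_antisymm h h')
     total := fun _ _ => le_total _ _ }, fun _ _ h => hmono h⟩

section Keys

variable {ι β : Type*} [Fintype ι] [Nonempty ι] [LinearOrder β] (ρ : ι → α → β)

theorem exists_isRealizer_of_keys (hmono : ∀ i, Monotone (ρ i))
    (hinj : ∀ i, Function.Injective (ρ i))
    (hrev : ∀ x y, ¬ x ≤ y → ¬ y ≤ x → ∃ i, ρ i y < ρ i x) :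
    ∃ L : Fin (Fintype.card ι) → α → α → Prop, IsRealizer L := by
  let e := Fintype.equivFin ι
  refine ⟨fun k x y => ρ (e.symm k) x ≤ ρ (e.symm k) y,
    fun k => isLinExt_of_monotone_of_injective (hmono _) (hinj _),
    fun x y => ⟨fun h k => hmono _ h, fun h => ?_⟩⟩
  by_contra hxy
  by_cases hyx : y ≤ x
  · obtain ⟨i⟩ := ‹Nonempty ι›
    have hi : ρ i x ≤ ρ i y := by simpa using h (e i)
    exact hxy (hinj i (hi.antisymm (hmono i hyx))).le
  · obtain ⟨i, hi⟩ := hrev x y hxy hyx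
    exact (h (e i)).not_gt (by simpa using hi)

theorem pdim_le_card_of_keys (hmono : ∀ i, Monotone (ρ i))
    (hinj : ∀ i, Function.Injective (ρ i))
    (hrev : ∀ x y, ¬ x ≤ y → ¬ y ≤ x → ∃ i, ρ i y < ρ i x) :
    pdim α ≤ Fintype.card ι :=
  Nat.sInf_le ⟨Fintype.card_pos, exists_isRealizer_of_keys ρ hmono hinj hrev⟩

end Keys

theorem pdim_le_one [Subsingleton α] : pdim α ≤ 1 := by
  simpa using pdim_le_card_of_keys (ι := Unit) (fun _ _ => (0 : ℤ)) (fun _ => monotone_const)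
    (fun _ => Function.injective_of_subsingleton _)
    (fun x y hxy _ => absurd (Subsingleton.elim x y).le hxy)

theorem pdim_le_two_of_forall_not_lt [Countable α] (h : ∀ x y : α, ¬ x < y) : pdim α ≤ 2 := by
  obtain ⟨f, hf⟩ := exists_injective_nat α
  have hmono : ∀ g : α → ℤ, Monotone g := fun g x y hxy => by
    rw [(hxy.lt_or_eq.resolve_left (h x y))]
  have key : ∀ b : Bool, Function.Injective fun x => if b then (f x : ℤ) else -f x := by
    rintro (_ | _) x y hxy <;> exact hf (by simpa using hxy)
  simpa using pdim_le_card_of_keys (fun (b : Bool) x => if b then (f x : ℤ) else -f x)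
    (fun _ => hmono _) key fun x y hxy _ => by
      rcases lt_or_gt_of_ne ((key true).ne (ne_of_not_le hxy)) with hlt | hlt
      · exact ⟨false, by simpa using hlt⟩
      · exact ⟨true, by simpa using hlt⟩

theorem IsRealizer.card_le_of_standardExample {d : ℕ} {L : Fin d → α → α → Prop}
    (hL : IsRealizer L) {ι : Type*} [Fintype ι] (x y : ι → α) (hxy : ∀ i, ¬ x i ≤ y i)
    (hcross : ∀ i j, i ≠ j → x i ≤ y j) : Fintype.card ι ≤ d := by
  have hrev : ∀ i, ∃ k, ¬ L k (x i) (y i) := fun i => by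
    by_contra! h
    exact hxy i ((hL.2 _ _).2 h)
  choose f hf using hrev
  -- two pairs reversed by the same extension would give `x i ≤ y j ≤ x j ≤ y i` there
  have hinj : Function.Injective f := fun i j hij => by
    by_contra hne
    have := (hL.1 (f i)).1
    have hj : L (f i) (y j) (x j) := (total_of _ _ _).resolve_left (hij ▸ hf j)
    exact hf i (trans_of _ (trans_of _ ((hL.2 _ _).1 (hcross i j hne) _) hj)
      ((hL.2 _ _).1 (hcross j i (Ne.symm hne)) _))
  simpa using Fintype.card_le_of_injective f hinj

theorem le_pdim_of_standardExample
    (hfin : ∃ d, 0 < d ∧ ∃ L : Fin d → α → α → Prop, IsRealizer L)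
    {ι : Type*} [Fintype ι] (x y : ι → α) (hxy : ∀ i, ¬ x i ≤ y i)
    (hcross : ∀ i j, i ≠ j → x i ≤ y j) : Fintype.card ι ≤ pdim α :=
  le_csInf hfin fun _ ⟨_, _, hL⟩ => hL.card_le_of_standardExample x y hxy hcross

theorem card_le_heightSet {S : Set α} (hS : S.Finite) {t : Finset α} (hts : ↑t ⊆ S)
    (ht : IsChain (· ≤ ·) (t : Set α)) : t.card ≤ heightSet S :=
  le_csSup ⟨hS.toFinset.card, by
    rintro _ ⟨u, hu, -, rfl⟩
    exact Finset.card_le_card (Set.Finite.subset_toFinset.2 hu)⟩ ⟨t, hts, ht, rfl⟩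

theorem card_le_heightSet_of_strictMonoOn {β : Type*} [LinearOrder β] {S : Set α}
    (hS : S.Finite) {f : β → α} {s : Finset β} (hf : StrictMonoOn f s)
    (hfS : Set.MapsTo f s S) : s.card ≤ heightSet S := by
  classical
  rw [← Finset.card_image_of_injOn hf.injOn]
  refine card_le_heightSet hS (by simpa using hfS.image_subset) ?_
  rintro _ hu _ hv -
  simp only [Finset.coe_image, Set.mem_image, Finset.mem_coe] at hu hv
  obtain ⟨m, hm, rfl⟩ := hu
  obtain ⟨m', hm', rfl⟩ := hv
  rcases le_total m m' with h | h
  · exact Or.inl (hf.monotoneOn hm hm' h)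
  · exact Or.inr (hf.monotoneOn hm' hm h)

end General

theorem TwoChains.inl_lt_inl {k : ℕ} {i j : Fin k} (h : i < j) :
    (show TwoChains k from .inl i) < .inl j :=
  ⟨h.le, h.not_ge⟩

theorem TwoChains.inr_lt_inr {k : ℕ} {i j : Fin k} (h : i < j) :
    (show TwoChains k from .inr i) < .inr j :=
  ⟨h.le, h.not_ge⟩

theorem not_nonempty_twoChains_three_orderEmbedding_of_isChain [PartialOrder α]
    (h : IsChain (· ≤ ·) {y : α | ∃ x z, x < y ∧ y < z}) :
    ¬ Nonempty (TwoChains 3 ↪o α) := by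
  rintro ⟨f⟩
  have hmid : ∀ u v w : TwoChains 3, u < v → v < w → f v ∈ {y : α | ∃ x z, x < y ∧ y < z} :=
    fun u _ w huv hvw => ⟨f u, f w, f.lt_iff_lt.2 huv, f.lt_iff_lt.2 hvw⟩
  have hl := hmid (.inl 0) (.inl 1) (.inl 2) (TwoChains.inl_lt_inl (by decide))
    (TwoChains.inl_lt_inl (by decide))
  have hr := hmid (.inr 0) (.inr 1) (.inr 2) (TwoChains.inr_lt_inr (by decide))
    (TwoChains.inr_lt_inr (by decide))
  rcases h.total hl hr with hlr | hrl
  · exact (f.le_iff_le.1 hlr : TwoChains.le (.inl 1) (.inr 1))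
  · exact (f.le_iff_le.1 hrl : TwoChains.le (.inr 1) (.inl 1))

/-- Indices are shifted down by one from the 1-based `a_i < c_i`, `c_{i-1} < b_i`: here
`a i < c (i + 1)` and `c i < b i`. -/
inductive SpinedStandard (n : ℕ) : Type
  | a (i : Fin n)
  | c (k : Fin (n + 1))
  | b (j : Fin n)
  deriving Fintype

namespace SpinedStandard

variable {n : ℕ}

def le : SpinedStandard n → SpinedStandard n → Prop
  | a i, a j => i.1 = j.1
  | a i, c k => i.1 < k.1
  | a i, b j => i.1 ≠ j.1
  | c k, c k' => k.1 ≤ k'.1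
  | c k, b j => k.1 ≤ j.1
  | b j, b j' => j.1 = j'.1
  | _, _ => False

instance : PartialOrder (SpinedStandard n) where
  le := le
  le_refl x := by cases x <;> simp [le]
  le_trans x y z := by cases x <;> cases y <;> cases z <;> simp [le] <;> omega
  le_antisymm x y := by
    cases x <;> cases y <;> simp [le, Fin.ext_iff] <;> omega

@[simp] theorem a_le_a {i j : Fin n} : a i ≤ a j ↔ i.1 = j.1 := Iff.rfl
@[simp] theorem a_le_c {i : Fin n} {k : Fin (n + 1)} : a i ≤ c k ↔ i.1 < k.1 := Iff.rfl
@[simp] theorem a_le_b {i j : Fin n} : a i ≤ b j ↔ i.1 ≠ j.1 := Iff.rfl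
@[simp] theorem c_le_c {k k' : Fin (n + 1)} : c k ≤ c k' ↔ k.1 ≤ k'.1 := Iff.rfl
@[simp] theorem c_le_b {k : Fin (n + 1)} {j : Fin n} : c k ≤ b j ↔ k.1 ≤ j.1 := Iff.rfl
@[simp] theorem b_le_b {j j' : Fin n} : b j ≤ b j' ↔ j.1 = j'.1 := Iff.rfl
@[simp] theorem not_c_le_a {k : Fin (n + 1)} {i : Fin n} : ¬ c k ≤ a i := id
@[simp] theorem not_b_le_a {j i : Fin n} : ¬ b j ≤ a i := id
@[simp] theorem not_b_le_c {j : Fin n} {k : Fin (n + 1)} : ¬ b j ≤ c k := id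

theorem exists_eq_c_of_lt_of_lt {x y z : SpinedStandard n} (hxy : x < y) (hyz : y < z) :
    ∃ k, y = c k := by
  rcases x with _ | _ | _ <;> rcases y with _ | _ | _ <;> rcases z with _ | _ | _ <;>
    simp only [lt_iff_le_not_ge, a_le_a, a_le_c, a_le_b, c_le_c, c_le_b, b_le_b, not_c_le_a,
      not_b_le_a, not_b_le_c, false_and] at hxy hyz ⊢ <;> first | omega | exact ⟨_, rfl⟩

theorem not_nonempty_twoChains_three_orderEmbedding :
    ¬ Nonempty (TwoChains 3 ↪o SpinedStandard n) :=
  not_nonempty_twoChains_three_orderEmbedding_of_isChain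
    fun _ ⟨_, _, h₁, h₂⟩ _ ⟨_, _, h₃, h₄⟩ _ => by
      obtain ⟨k, rfl⟩ := exists_eq_c_of_lt_of_lt h₁ h₂
      obtain ⟨k', rfl⟩ := exists_eq_c_of_lt_of_lt h₃ h₄
      simpa using le_total k.1 k'.1

/- Integer keys of three linear extensions: `keyAC` is `c 0 < a 0 < c 1 < a 1 < ⋯ < c n` followed
by the `b`'s downwards; `keyCB` is the `a`'s downwards followed by `c 0 < b 0 < c 1 < b 1 < ⋯`;
`keyDiag i` is the other `a`'s downwards, then the chain `c` with `c i < b i < a i < c (i + 1)`,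
then the other `b`'s upwards. -/

def keyAC : SpinedStandard n → ℤ
  | a i => 4 * i.1 + 2
  | c k => 4 * k.1
  | b j => 8 * n + 16 - 4 * j.1

def keyCB : SpinedStandard n → ℤ
  | a i => -4 * i.1 - 4
  | c k => 4 * k.1
  | b j => 4 * j.1 + 2

def keyDiag (i : Fin n) : SpinedStandard n → ℤ
  | a i' => if i' = i then 4 * i.1 + 2 else -4 * i'.1 - 4
  | c k => 4 * k.1
  | b j => if j = i then 4 * i.1 + 1 else 8 * n + 8 + 4 * j.1

def keys (s : Finset (Fin n)) : Bool ⊕ s → SpinedStandard n → ℤ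
  | .inl true => keyAC
  | .inl false => keyCB
  | .inr i => keyDiag i

theorem monotone_keys (s : Finset (Fin n)) (k : Bool ⊕ s) : Monotone (keys s k) := by
  rcases k with (_ | _) | ⟨i, -⟩ <;> rintro (_ | _ | _) (_ | _ | _) h <;>
    simp only [keys, keyAC, keyCB, keyDiag, a_le_a, a_le_c, a_le_b, c_le_c, c_le_b, b_le_b,
      not_c_le_a, not_b_le_a, not_b_le_c] at h ⊢ <;> (try split_ifs) <;>
    (try simp only [Fin.ext_iff] at *) <;> omega

theorem injective_keys (s : Finset (Fin n)) (k : Bool ⊕ s) : Function.Injective (keys s k) := by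
  rcases k with (_ | _) | ⟨i, -⟩ <;> rintro (_ | _ | _) (_ | _ | _) h <;>
    simp only [keys, keyAC, keyCB, keyDiag] at h <;> (try split_ifs at h) <;>
    simp only [a.injEq, b.injEq, c.injEq, reduceCtorEq, Fin.ext_iff] at * <;> omega

theorem exists_keys_lt {s : Finset (Fin n)} {x y : SpinedStandard n} (hxy : ¬ x ≤ y)
    (hyx : ¬ y ≤ x) (hs : ∀ i, x = a i → y = b i → i ∈ s) : ∃ k, keys s k y < keys s k x := by
  rcases x with i | k | j <;> rcases y with i' | k' | j' <;>
    simp only [a_le_a, a_le_c, a_le_b, c_le_c, c_le_b, b_le_b, not_c_le_a, not_b_le_a,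
      not_b_le_c, not_not] at hxy hyx
  case a.b =>
    obtain rfl : i = j' := Fin.ext hxy
    exact ⟨.inr ⟨i, hs i rfl rfl⟩, by simp [keys, keyDiag]⟩
  all_goals
    by_contra! h
    have hAC := h (.inl true)
    have hCB := h (.inl false)
    simp only [keys, keyAC, keyCB] at hAC hCB
    omega

theorem exists_isRealizer :
    ∃ d, 0 < d ∧ ∃ L : Fin d → SpinedStandard n → SpinedStandard n → Prop, IsRealizer L :=
  ⟨_, Fintype.card_pos, exists_isRealizer_of_keys (keys .univ) (monotone_keys _)
    (injective_keys _) fun _ _ hxy hyx => exists_keys_lt hxy hyx fun i _ _ => Finset.mem_univ i⟩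

theorem le_pdim : n ≤ pdim (SpinedStandard n) := by
  simpa using le_pdim_of_standardExample exists_isRealizer a b (fun _ => by simp)
    fun _ _ hij => by simpa [Fin.ext_iff] using hij

theorem pdim_le_two_add_card (Q : Set (SpinedStandard n)) (s : Finset (Fin n))
    (hs : ∀ i, a i ∈ Q → b i ∈ Q → i ∈ s) : pdim Q ≤ 2 + s.card := by
  simpa [add_comm] using pdim_le_card_of_keys (fun k (x : Q) => keys s k x)
    (fun k => (monotone_keys s k).comp (Subtype.mono_coe _))
    (fun k => (injective_keys s k).comp Subtype.val_injective)
    fun x y hxy hyx => exists_keys_lt hxy hyx fun i hx hy => hs i (hx ▸ x.2) (hy ▸ y.2)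

def spinePath (i j : Fin n) (m : ℕ) : SpinedStandard n :=
  if m ≤ i.1 then a i else if h : m ≤ j.1 then c ⟨m, by omega⟩ else b j

theorem strictMonoOn_spinePath {i j : Fin n} (hij : i < j) :
    StrictMonoOn (spinePath i j) (Set.Icc i.1 (j.1 + 1)) := by
  rintro m ⟨him, -⟩ m' ⟨-, hm'j⟩ hmm'
  have : i.1 < j.1 := hij
  unfold spinePath
  split_ifs <;> simp only [lt_iff_le_not_ge, a_le_a, a_le_c, a_le_b, c_le_c, c_le_b, b_le_b,
    not_c_le_a, not_b_le_a, not_b_le_c, not_true_eq_false, not_false_eq_true, and_true,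
    and_false, false_and] <;> omega

theorem spinePath_mem {Q : Set (SpinedStandard n)} (hQ : Q.OrdConnected) {i j : Fin n}
    (hi : a i ∈ Q) (hj : b j ∈ Q) (m : ℕ) : spinePath i j m ∈ Q := by
  unfold spinePath
  split_ifs with him hmj
  · exact hi
  · exact hQ.out hi hj ⟨by simpa using him, by simpa using hmj⟩
  · exact hj

theorem sub_add_two_le_heightSet {Q : Set (SpinedStandard n)} (hQ : Q.OrdConnected)
    {i j : Fin n} (hij : i < j) (hi : a i ∈ Q) (hj : b j ∈ Q) : j.1 - i.1 + 2 ≤ heightSet Q := by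
  have := card_le_heightSet_of_strictMonoOn Q.toFinite (s := Finset.Icc i.1 (j.1 + 1))
    (by simpa using strictMonoOn_spinePath hij) fun m _ => spinePath_mem hQ hi hj m
  simp only [Nat.card_Icc] at this
  omega

theorem card_add_one_le_heightSet {Q : Set (SpinedStandard n)} (hQ : Q.OrdConnected)
    {D : Finset (Fin n)} (hD : 1 < D.card) (hDQ : ∀ i ∈ D, a i ∈ Q ∧ b i ∈ Q) :
    D.card + 1 ≤ heightSet Q := by
  have hne : D.Nonempty := Finset.card_pos.1 (by omega)
  have hsub : D ⊆ Finset.Icc (D.min' hne) (D.max' hne) :=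
    fun d hd => Finset.mem_Icc.2 ⟨D.min'_le d hd, D.le_max' d hd⟩
  have hcard := (Finset.card_le_card hsub).trans_eq (Fin.card_Icc _ _)
  have := sub_add_two_le_heightSet hQ (D.min'_lt_max'_of_card hD)
    (hDQ _ (D.min'_mem hne)).1 (hDQ _ (D.max'_mem hne)).2
  omega

theorem pdim_le_heightSet_add_one {Q : Set (SpinedStandard n)} (hQ : Q.OrdConnected) :
    pdim Q ≤ heightSet Q + 1 := by
  classical
  rcases Q.subsingleton_or_nontrivial with hQ₁ | ⟨x, hx, -⟩
  · have := hQ₁.coe_sort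
    exact pdim_le_one.trans (Nat.le_add_left _ _)
  have h₁ : 1 ≤ heightSet Q := by
    simpa using card_le_heightSet Q.toFinite (t := {x}) (by simpa) (by simp)
  by_cases hanti : ∀ u v : Q, ¬ u < v
  · exact (pdim_le_two_of_forall_not_lt hanti).trans (by omega)
  obtain ⟨u, v, huv⟩ : ∃ u v : Q, u < v := by simpa using hanti
  have h₂ : 2 ≤ heightSet Q := by
    simpa [Finset.card_pair (Subtype.coe_injective.ne huv.ne)] using
      card_le_heightSet Q.toFinite (t := {u.1, v.1}) (by simp [Set.insert_subset_iff])
        (by simpa using IsChain.pair (show u.1 ≤ v.1 from huv.le))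
  set D := Finset.univ.filter fun i => a i ∈ Q ∧ b i ∈ Q
  have hdim : pdim Q ≤ 2 + D.card := pdim_le_two_add_card Q D fun i hi hj => by simp [D, hi, hj]
  rcases le_or_gt D.card 1 with hD | hD
  · omega
  · have := card_add_one_le_heightSet hQ hD fun i hi => by simpa [D] using hi
    omega

end SpinedStandard

theorem exists_poset_excluding_three_plus_three_general (n : ℕ) :
    ∃ (β : Type) (_ : PartialOrder β) (_ : Fintype β),
      (¬ Nonempty (TwoChains 3 ↪o β)) ∧ n ≤ pdim β ∧
      ∀ Q : Set β, Q.OrdConnected → pdim ↥Q ≤ heightSet Q + 1 :=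
  ⟨SpinedStandard n, inferInstance, inferInstance,
    SpinedStandard.not_nonempty_twoChains_three_orderEmbedding, SpinedStandard.le_pdim,
    fun _ => SpinedStandard.pdim_le_heightSet_add_one⟩

/-- For every `n ≥ 2` there is a finite poset excluding `3 + 3` with dimension at least
`n` in which every convex subposet `Q` satisfies `dim(Q) ≤ h(Q) + 1`. -/
theorem exists_poset_excluding_three_plus_three (n : ℕ) (hn : 2 ≤ n) :
    ∃ (β : Type) (_ : PartialOrder β) (_ : Fintype β),
      (¬ Nonempty (TwoChains 3 ↪o β)) ∧ n ≤ pdim β ∧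
      ∀ Q : Set β, Q.OrdConnected → pdim ↥Q ≤ heightSet Q + 1 :=
  exists_poset_excluding_three_plus_three_general n
end
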